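/- Let A be an open subset of ℝⁿ contained in the annulus {x : R ≤ |x| < 2R} for some R > 0, and let M_A f(x) = sup_{t>0} ∫_A |f(x+ty)| dy. Then there is a constant c₁ > 0, independent of A and R, such that the weak-type (1,1) operator norm satisfies ‖M_A‖_{L^1→L^{1,∞}} ≥ c₁ Rⁿ |π(A)|, where π : ℝⁿ∖{0} → S^{n−1} is the spherical projection π(x) = x/|x| and |π(A)| denotes the (n−1)-dimensional surface measure of π(A) ⊂ S^{n−1}. -/

import Mathlib

open MeasureTheory Set
open scoped ENNReal

noncomputable section

/-- The maximal operator `M_A f(x) = sup_{t>0} ∫_A |f(x+ty)| dy` associated to a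
bounded measurable set `A ⊆ ℝⁿ`. -/
def maxOpSet {n : ℕ} (A : Set (EuclideanSpace ℝ (Fin n)))
    (f : EuclideanSpace ℝ (Fin n) → ℝ) (x : EuclideanSpace ℝ (Fin n)) : ℝ≥0∞ :=
  ⨆ (t : ℝ) (_ : 0 < t), ∫⁻ y in A, (‖f (x + t • y)‖₊ : ℝ≥0∞)

/-- The `L^p`-seminorm of a nonnegative (`ℝ≥0∞`-valued) function, `1 ≤ p ≤ ∞`. -/
def elpE {α : Type*} [MeasurableSpace α] (g : α → ℝ≥0∞) (p : ℝ≥0∞) (μ : Measure α) :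
    ℝ≥0∞ :=
  if p = ∞ then essSup g μ else (∫⁻ x, g x ^ p.toReal ∂μ) ^ (1 / p.toReal)

/-- The spherical projection `π(x) = x/|x|`. -/
def sphProj {n : ℕ} (x : EuclideanSpace ℝ (Fin n)) : EuclideanSpace ℝ (Fin n) :=
  ‖x‖⁻¹ • x

/-!
Fix `δ > 0` and let `K = {a | B(a, δ) ⊆ A}`. For `f` the indicator of `B(0, 4δ)`, every `x` with
`2R ≤ |x| ≤ 4R` and `π(-x) ∈ π(K)` is `-t a` with `a ∈ K`, `0 < t ≤ 4`, so
`M_A f(x) ≥ |B(a, δ)| = 4⁻ⁿ ‖f‖₁`. These `x` form `-S` for the conical shell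
`S = {2R ≤ |x| ≤ 4R, π(x) ∈ π(K)}`, so the weak-type bound gives `|S| ≤ 2 · 4ⁿ C`. Conversely `x ↦ (2R π(x), |x|)` is `2`-Lipschitz from `S`
onto `2R π(K) × [2R, 4R]`, and slicing covers gives `H^d(T) (b - a) ≤ H^{d+1}(T × [a, b])`, so
`|S| ≳ Rⁿ H^{n-1}(π(K))`. Exhausting `A` by the sets `K` finishes the proof.
-/

open Metric
open scoped NNReal Pointwise

section HausdorffProd

variable {X : Type*} [EMetricSpace X]

def hausdorffApprox (d : ℝ) (r : ℝ≥0∞) (s : Set X) : ℝ≥0∞ :=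
  ⨅ (t : ℕ → Set X) (_ : s ⊆ ⋃ n, t n) (_ : ∀ n, ediam (t n) ≤ r),
    ∑' n, ⨆ _ : (t n).Nonempty, ediam (t n) ^ d

lemma hausdorffMeasure_eq_iSup_hausdorffApprox [MeasurableSpace X] [BorelSpace X] (d : ℝ)
    (s : Set X) : μH[d] s = ⨆ (r : ℝ≥0∞) (_ : 0 < r), hausdorffApprox d r s :=
  Measure.hausdorffMeasure_apply d s

lemma ediam_preimage_prodMk_right_le (t : Set (X × ℝ)) (τ : ℝ) :
    ediam ((·, τ) ⁻¹' t) ≤ ediam t :=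
  ediam_le fun x hx y hy ↦ by
    simpa [Prod.edist_eq] using edist_le_ediam_of_mem (s := t) hx hy

/-- The slices at height `τ` of a cover of `S × [a, b]` cover `S`. -/
lemma hausdorffApprox_le_tsum_indicator {d : ℝ} (hd : 0 ≤ d) {r : ℝ≥0∞} {S : Set X}
    {a b τ : ℝ} (hτ : τ ∈ Icc a b) {t : ℕ → Set (X × ℝ)} (hcov : S ×ˢ Icc a b ⊆ ⋃ j, t j)
    (hdiam : ∀ j, ediam (t j) ≤ r) :
    hausdorffApprox d r S ≤ ∑' j, (closure (Prod.snd '' t j)).indicator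
      (fun _ ↦ ⨆ _ : (t j).Nonempty, ediam (t j) ^ d) τ := by
  have hslices : S ⊆ ⋃ j, (·, τ) ⁻¹' t j := fun x hx ↦ by
    simpa using hcov (mk_mem_prod hx hτ)
  refine iInf₂_le_of_le _ hslices <|
    iInf_le_of_le (fun j ↦ (ediam_preimage_prodMk_right_le _ τ).trans (hdiam j)) <|
    ENNReal.tsum_le_tsum fun j ↦ iSup_le fun hne ↦ ?_
  obtain ⟨x, hx⟩ := hne
  have hxτ : (x, τ) ∈ t j := hx
  rw [indicator_of_mem (subset_closure (mem_image_of_mem Prod.snd hxτ))]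
  exact le_iSup_of_le ⟨_, hxτ⟩ (ENNReal.rpow_le_rpow (ediam_preimage_prodMk_right_le _ τ) hd)

lemma volume_closure_image_snd_le (t : Set (X × ℝ)) :
    volume (closure (Prod.snd '' t)) ≤ ediam t :=
  calc volume (closure (Prod.snd '' t)) ≤ ediam (Prod.snd '' t) :=
        (Real.volume_le_diam _).trans_eq (ediam_closure _)
    _ ≤ ediam t := by simpa using LipschitzWith.prod_snd.ediam_image_le t

theorem hausdorffMeasure_mul_le_hausdorffMeasure_prod_Icc [MeasurableSpace X] [BorelSpace X]
    {d : ℝ} (hd : 0 ≤ d) (S : Set X) (a b : ℝ) :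
    μH[d] S * ENNReal.ofReal (b - a) ≤ μH[d + 1] (S ×ˢ Icc a b) := by
  simp only [hausdorffMeasure_eq_iSup_hausdorffApprox, ENNReal.iSup_mul]
  refine iSup₂_le fun r hr ↦ le_iSup₂_of_le r hr <| le_iInf₂ fun t hcov ↦ le_iInf fun hdiam ↦ ?_
  set c : ℕ → ℝ≥0∞ := fun j ↦ ⨆ _ : (t j).Nonempty, ediam (t j) ^ d
  have hmeas : ∀ j, Measurable ((closure (Prod.snd '' t j)).indicator fun _ ↦ c j) := fun j ↦
    measurable_const.indicator isClosed_closure.measurableSet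
  calc hausdorffApprox d r S * ENNReal.ofReal (b - a)
      = ∫⁻ _ in Icc a b, hausdorffApprox d r S := by rw [setLIntegral_const, Real.volume_Icc]
    _ ≤ ∫⁻ τ in Icc a b, ∑' j, (closure (Prod.snd '' t j)).indicator (fun _ ↦ c j) τ :=
        setLIntegral_mono (Measurable.tsum hmeas) fun τ hτ ↦
          hausdorffApprox_le_tsum_indicator hd hτ hcov hdiam
    _ = ∑' j, c j * volume (closure (Prod.snd '' t j) ∩ Icc a b) := by
        rw [lintegral_tsum fun j ↦ (hmeas j).aemeasurable]
        refine tsum_congr fun j ↦ ?_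
        rw [lintegral_indicator_const isClosed_closure.measurableSet,
          Measure.restrict_apply isClosed_closure.measurableSet]
    _ ≤ ∑' j, ⨆ _ : (t j).Nonempty, ediam (t j) ^ (d + 1) := by
        refine ENNReal.tsum_le_tsum fun j ↦ ?_
        simp only [c, ENNReal.iSup_mul, ENNReal.rpow_add_of_nonneg _ _ hd zero_le_one,
          ENNReal.rpow_one]
        gcongr
        exact (measure_mono inter_subset_left).trans (volume_closure_image_snd_le _)

end HausdorffProd

section SphericalProjection

variable {n : ℕ}

lemma norm_sphProj {x : EuclideanSpace ℝ (Fin n)} (hx : x ≠ 0) : ‖sphProj x‖ = 1 :=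
  norm_smul_inv_norm hx

lemma norm_smul_sphProj (x : EuclideanSpace ℝ (Fin n)) : ‖x‖ • sphProj x = x := by
  rcases eq_or_ne x 0 with rfl | hx
  · simp
  · rw [sphProj, smul_smul, mul_inv_cancel₀ (norm_ne_zero_iff.2 hx), one_smul]

lemma sphProj_smul_of_pos (x : EuclideanSpace ℝ (Fin n)) {t : ℝ} (ht : 0 < t) :
    sphProj (t • x) = sphProj x := by
  rw [sphProj, sphProj, norm_smul, Real.norm_eq_abs, abs_of_pos ht, smul_smul, mul_inv_rev,
    inv_mul_cancel_right₀ ht.ne']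

lemma sphProj_of_norm_eq_one {σ : EuclideanSpace ℝ (Fin n)} (hσ : ‖σ‖ = 1) :
    sphProj σ = σ := by
  rw [sphProj, hσ, inv_one, one_smul]

lemma norm_sphProj_sub_le {x y : EuclideanSpace ℝ (Fin n)} (hx : x ≠ 0) (hy : y ≠ 0) :
    ‖sphProj x - sphProj y‖ ≤ 2 * ‖x - y‖ / ‖x‖ := by
  have hx' : 0 < ‖x‖ := norm_pos_iff.2 hx
  have hy' : 0 < ‖y‖ := norm_pos_iff.2 hy
  have hsplit : sphProj x - sphProj y = ‖x‖⁻¹ • (x - y) + (‖x‖⁻¹ - ‖y‖⁻¹) • y := by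
    rw [sphProj, sphProj, smul_sub, sub_smul]
    abel
  have hradial : ‖(‖x‖⁻¹ - ‖y‖⁻¹) • y‖ = |‖y‖ - ‖x‖| / ‖x‖ := by
    rw [norm_smul, Real.norm_eq_abs, ← abs_of_pos hy', ← abs_mul, abs_of_pos hy', ← abs_of_pos hx',
      ← abs_div, abs_of_pos hx']
    congr 1
    field_simp
  calc ‖sphProj x - sphProj y‖ ≤ ‖‖x‖⁻¹ • (x - y)‖ + ‖(‖x‖⁻¹ - ‖y‖⁻¹) • y‖ :=
        hsplit ▸ norm_add_le _ _
    _ = ‖x - y‖ / ‖x‖ + |‖y‖ - ‖x‖| / ‖x‖ := by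
        rw [hradial, norm_smul, norm_inv, norm_norm, inv_mul_eq_div]
    _ ≤ ‖x - y‖ / ‖x‖ + ‖x - y‖ / ‖x‖ := by
        gcongr
        rw [norm_sub_rev x y]
        exact abs_norm_sub_norm_le y x
    _ = 2 * ‖x - y‖ / ‖x‖ := by ring

lemma lipschitzOnWith_smul_sphProj {a : ℝ} (ha : 0 < a) :
    LipschitzOnWith 2 (fun x : EuclideanSpace ℝ (Fin n) ↦ a • sphProj x) {x | a ≤ ‖x‖} := by
  refine LipschitzOnWith.of_dist_le_mul fun x hx y hy ↦ ?_
  have hx0 : x ≠ 0 := norm_pos_iff.1 (ha.trans_le hx)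
  have hy0 : y ≠ 0 := norm_pos_iff.1 (ha.trans_le hy)
  rw [dist_eq_norm, dist_eq_norm, ← smul_sub, norm_smul, Real.norm_eq_abs, abs_of_pos ha,
    NNReal.coe_ofNat]
  calc a * ‖sphProj x - sphProj y‖ ≤ a * (2 * ‖x - y‖ / ‖x‖) := by
        gcongr
        exact norm_sphProj_sub_le hx0 hy0
    _ ≤ ‖x‖ * (2 * ‖x - y‖ / ‖x‖) := by
        gcongr
        exact hx
    _ = 2 * ‖x - y‖ := by field_simp

def conicalShell (T : Set (EuclideanSpace ℝ (Fin n))) (a b : ℝ) :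
    Set (EuclideanSpace ℝ (Fin n)) :=
  {x | ‖x‖ ∈ Icc a b ∧ sphProj x ∈ T}

lemma smul_prod_Icc_subset_image_conicalShell {T : Set (EuclideanSpace ℝ (Fin n))}
    (hT : T ⊆ sphere 0 1) {a : ℝ} (ha : 0 < a) (b : ℝ) :
    (a • T) ×ˢ Icc a b ⊆ (fun x ↦ (a • sphProj x, ‖x‖)) '' conicalShell T a b := by
  rintro ⟨_, s⟩ ⟨⟨σ, hσT, rfl⟩, hs⟩
  have hσ : ‖σ‖ = 1 := mem_sphere_zero_iff_norm.1 (hT hσT)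
  have hs0 : 0 < s := ha.trans_le hs.1
  have hnorm : ‖s • σ‖ = s := by rw [norm_smul, hσ, mul_one, Real.norm_of_nonneg hs0.le]
  have hproj : sphProj (s • σ) = σ := by
    rw [sphProj_smul_of_pos σ hs0, sphProj_of_norm_eq_one hσ]
  refine ⟨s • σ, ⟨?_, ?_⟩, ?_⟩
  · rw [hnorm]
    exact hs
  · rw [hproj]
    exact hσT
  · simp only [hproj, hnorm]

theorem ofReal_mul_hausdorffMeasure_le_hausdorffMeasure_conicalShell
    {T : Set (EuclideanSpace ℝ (Fin n))} (hT : T ⊆ sphere 0 1) {a : ℝ} (ha : 0 < a) (b : ℝ) :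
    ENNReal.ofReal (a ^ ((n : ℝ) - 1) * (b - a)) * μH[(n : ℝ) - 1] T ≤
      2 ^ n * μH[n] (conicalShell T a b) := by
  rcases n.eq_zero_or_pos with rfl | hn
  · have : T = ∅ := eq_empty_of_subset_empty fun σ hσ ↦ by
      simpa [Subsingleton.elim σ 0] using hT hσ
    simp [this]
  have hd : 0 ≤ (n : ℝ) - 1 := by
    rw [sub_nonneg]
    exact_mod_cast hn
  have hlip : LipschitzOnWith 2 (fun x ↦ (a • sphProj x, ‖x‖)) (conicalShell T a b) :=
    ((lipschitzOnWith_smul_sphProj ha).prodMk lipschitzWith_one_norm.lipschitzOnWith).weaken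
      (by norm_num) |>.mono fun x hx ↦ hx.1.1
  have hscale : ENNReal.ofReal (a ^ ((n : ℝ) - 1)) = ((‖a‖₊ ^ ((n : ℝ) - 1) : ℝ≥0) : ℝ≥0∞) := by
    rw [← ENNReal.ofReal_coe_nnreal, NNReal.coe_rpow, coe_nnnorm, Real.norm_of_nonneg ha.le]
  calc ENNReal.ofReal (a ^ ((n : ℝ) - 1) * (b - a)) * μH[(n : ℝ) - 1] T
      = μH[(n : ℝ) - 1] (a • T) * ENNReal.ofReal (b - a) := by
        rw [Measure.hausdorffMeasure_smul₀ hd ha.ne', ENNReal.ofReal_mul (by positivity), hscale,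
          ENNReal.smul_def, smul_eq_mul]
        ring
    _ ≤ μH[(n : ℝ) - 1 + 1] ((a • T) ×ˢ Icc a b) :=
        hausdorffMeasure_mul_le_hausdorffMeasure_prod_Icc hd _ a b
    _ ≤ μH[(n : ℝ) - 1 + 1] ((fun x ↦ (a • sphProj x, ‖x‖)) '' conicalShell T a b) :=
        measure_mono (smul_prod_Icc_subset_image_conicalShell hT ha b)
    _ ≤ (2 : ℝ≥0) ^ ((n : ℝ) - 1 + 1) * μH[(n : ℝ) - 1 + 1] (conicalShell T a b) :=
        hlip.hausdorffMeasure_image_le (by linarith)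
    _ = 2 ^ n * μH[n] (conicalShell T a b) := by
        rw [sub_add_cancel, ENNReal.coe_ofNat, ENNReal.rpow_natCast]

/-- `addHaarScalarFactor volume μH[n]` is the ratio of Lebesgue measure to `μH[n]` on `ℝⁿ`. -/
theorem ofReal_mul_hausdorffMeasure_le_volume_conicalShell {T : Set (EuclideanSpace ℝ (Fin n))}
    (hT : T ⊆ sphere 0 1) {R : ℝ} (hR : 0 < R) :
    ENNReal.ofReal ((volume : Measure (EuclideanSpace ℝ (Fin n))).addHaarScalarFactor μH[n] *
        R ^ n) * μH[(n : ℝ) - 1] T ≤ volume (conicalShell T (2 * R) (4 * R)) := by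
  have hshell := ofReal_mul_hausdorffMeasure_le_hausdorffMeasure_conicalShell hT
    (by positivity : 0 < 2 * R) (4 * R)
  have hscale : (2 * R) ^ ((n : ℝ) - 1) * (4 * R - 2 * R) = 2 ^ n * R ^ n := by
    rw [Real.rpow_sub_one (by positivity), Real.rpow_natCast]
    field_simp
    ring
  rw [hscale, ENNReal.ofReal_mul (by positivity), ENNReal.ofReal_pow zero_le_two,
    ENNReal.ofReal_ofNat, mul_assoc] at hshell
  have hlower := (ENNReal.mul_le_mul_iff_right (pow_ne_zero _ two_ne_zero)
    (ENNReal.pow_ne_top ENNReal.ofNat_ne_top)).1 hshell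
  have hvolume : volume (conicalShell T (2 * R) (4 * R)) =
      (volume : Measure (EuclideanSpace ℝ (Fin n))).addHaarScalarFactor μH[n] *
        μH[n] (conicalShell T (2 * R) (4 * R)) := by
    conv_lhs => rw [← EuclideanSpace.euclideanHausdorffMeasure_eq_volume n]
    rfl
  rw [hvolume, ENNReal.ofReal_mul (by positivity), ENNReal.ofReal_coe_nnreal, mul_assoc]
  gcongr

end SphericalProjection

section MaximalOperator

variable {n : ℕ}

def WeakType11Bound (A : Set (EuclideanSpace ℝ (Fin n))) (C : ℝ≥0∞) : Prop :=
  ∀ f : EuclideanSpace ℝ (Fin n) → ℝ, MemLp f 1 volume → ∀ α : ℝ≥0∞, α ≠ 0 →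
    α * volume {x | α < maxOpSet A f x} ≤ C * eLpNorm f 1 volume

lemma volume_ball_le_maxOpSet {A : Set (EuclideanSpace ℝ (Fin n))}
    {a : EuclideanSpace ℝ (Fin n)} {δ ρ t : ℝ} (hA : ball a δ ⊆ A) (ht : 0 < t)
    (htδ : t * δ ≤ ρ) :
    volume (ball a δ) ≤ maxOpSet A ((ball 0 ρ).indicator fun _ ↦ (1 : ℝ)) (-(t • a)) := by
  refine le_iSup₂_of_le (f := fun t (_ : 0 < t) ↦ ∫⁻ y in A, _) t ht ?_
  have hone : ∀ y ∈ ball a δ,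
      1 = (‖(ball 0 ρ).indicator (fun _ ↦ (1 : ℝ)) (-(t • a) + t • y)‖₊ : ℝ≥0∞) := by
    intro y hy
    have hlt : ‖-(t • a) + t • y‖ < ρ := by
      rw [neg_add_eq_sub, ← smul_sub, norm_smul, Real.norm_of_nonneg ht.le, ← dist_eq_norm]
      exact (mul_lt_mul_of_pos_left (mem_ball.1 hy) ht).trans_le htδ
    simp [indicator_of_mem (mem_ball_zero_iff.2 hlt)]
  calc volume (ball a δ) = ∫⁻ y in ball a δ, 1 := (setLIntegral_one _).symm
    _ = ∫⁻ y in ball a δ, (‖(ball 0 ρ).indicator (fun _ ↦ (1 : ℝ)) (-(t • a) + t • y)‖₊ : ℝ≥0∞) :=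
        setLIntegral_congr_fun measurableSet_ball hone
    _ ≤ _ := lintegral_mono_set hA

lemma volume_le_of_volume_ball_le_maxOpSet {A : Set (EuclideanSpace ℝ (Fin n))} {C : ℝ≥0∞}
    (hC : WeakType11Bound A C) {S : Set (EuclideanSpace ℝ (Fin n))} {δ κ : ℝ} (hδ : 0 < δ)
    (hκ : 0 < κ) (hS : ∀ x ∈ S, volume (ball (0 : EuclideanSpace ℝ (Fin n)) δ) ≤
      maxOpSet A ((ball 0 (κ * δ)).indicator fun _ ↦ (1 : ℝ)) x) :
    volume S ≤ ENNReal.ofReal (2 * κ ^ n) * C := by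
  set f := (ball (0 : EuclideanSpace ℝ (Fin n)) (κ * δ)).indicator fun _ ↦ (1 : ℝ)
  set B := volume (ball (0 : EuclideanSpace ℝ (Fin n)) δ)
  have hB0 : B ≠ 0 := (measure_ball_pos volume 0 hδ).ne'
  have hBtop : B ≠ ∞ := measure_ball_lt_top.ne
  have hnorm : eLpNorm f 1 volume = ENNReal.ofReal (κ ^ n) * B := by
    rw [eLpNorm_indicator_const measurableSet_ball one_ne_zero ENNReal.one_ne_top,
      Measure.addHaar_ball_mul_of_pos volume 0 hκ, finrank_euclideanSpace_fin]
    simp [B]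
  have hweak := hC f (memLp_indicator_const 1 measurableSet_ball 1 (Or.inr measure_ball_lt_top.ne))
    (B / 2) (ENNReal.half_pos hB0).ne'
  rw [hnorm] at hweak
  refine (ENNReal.mul_le_mul_iff_right (ENNReal.half_pos hB0).ne'
    (ENNReal.div_ne_top hBtop two_ne_zero)).1 ?_
  calc B / 2 * volume S ≤ B / 2 * volume {x | B / 2 < maxOpSet A f x} := by
        gcongr
        exact fun x hx ↦ (ENNReal.half_lt_self hB0 hBtop).trans_le (hS x hx)
    _ ≤ C * (ENNReal.ofReal (κ ^ n) * B) := hweak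
    _ = B / 2 * 2 * ENNReal.ofReal (κ ^ n) * C := by
        rw [ENNReal.div_mul_cancel two_ne_zero ENNReal.ofNat_ne_top]
        ring
    _ = B / 2 * (ENNReal.ofReal (2 * κ ^ n) * C) := by
        rw [ENNReal.ofReal_mul zero_le_two, ENNReal.ofReal_ofNat]
        ring

lemma volume_conicalShell_le_of_weakType11Bound {A : Set (EuclideanSpace ℝ (Fin n))}
    {C : ℝ≥0∞} (hC : WeakType11Bound A C) {R δ κ : ℝ} (hR : 0 < R) (hδ : 0 < δ) (hκ : 0 < κ)
    {K : Set (EuclideanSpace ℝ (Fin n))} (hK : ∀ a ∈ K, R ≤ ‖a‖ ∧ ball a δ ⊆ A) (r : ℝ) :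
    volume (conicalShell (sphProj '' K) r (κ * R)) ≤ ENNReal.ofReal (2 * κ ^ n) * C := by
  refine (Measure.measure_neg volume _).symm.trans_le <|
    volume_le_of_volume_ball_le_maxOpSet hC hδ hκ fun x hx ↦ ?_
  obtain ⟨⟨-, hxκ⟩, a, haK, hax⟩ := hx
  obtain ⟨haR, hball⟩ := hK a haK
  have ha : 0 < ‖a‖ := hR.trans_le haR
  have hx0 : 0 < ‖-x‖ := norm_pos_iff.2 fun h ↦
    ha.ne' (norm_eq_zero.2 (by simpa [h, sphProj, ha.ne'] using hax))
  have hxa : -x = (‖-x‖ / ‖a‖) • a := by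
    nth_rewrite 1 [← norm_smul_sphProj (-x)]
    rw [← hax, sphProj, smul_smul, ← div_eq_mul_inv]
  have htκ : ‖-x‖ / ‖a‖ ≤ κ := by
    rw [div_le_iff₀ ha]
    exact hxκ.trans (by gcongr)
  rw [← neg_neg x, hxa, ← Measure.addHaar_ball_center volume a]
  exact volume_ball_le_maxOpSet hball (div_pos hx0 ha) (by gcongr)

end MaximalOperator

lemma IsOpen.measure_image_eq_iSup {X Y : Type*} [PseudoMetricSpace X] [MeasurableSpace Y]
    {A : Set X} (hA : IsOpen A) (μ : Measure Y) (f : X → Y) :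
    μ (f '' A) = ⨆ k : ℕ, μ (f '' {a | ball a (1 / (k + 1)) ⊆ A}) := by
  have hmono : Monotone fun k : ℕ ↦ {a | ball a (1 / (k + 1)) ⊆ A} := fun i j hij a ha ↦
    (ball_subset_ball (by gcongr)).trans ha
  have hunion : ⋃ k : ℕ, {a | ball a (1 / (k + 1)) ⊆ A} = A := by
    refine Subset.antisymm (iUnion_subset fun k a ha ↦ ha (mem_ball_self (by positivity)))
      fun a ha ↦ ?_
    obtain ⟨ε, hε, hball⟩ := Metric.isOpen_iff.1 hA a ha
    obtain ⟨k, hk⟩ := exists_nat_one_div_lt hε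
    exact mem_iUnion.2 ⟨k, (ball_subset_ball hk.le).trans hball⟩
  conv_lhs => rw [← hunion, image_iUnion]
  exact Monotone.measure_iUnion fun i j hij ↦ image_mono (hmono hij)

/-- **Proposition 4.2 (lower bound).** If `A ⊆ ℝⁿ` is open and contained in the annulus
`{R ≤ |x| < 2R}`, then every weak-type `(1,1)` constant of `M_A` is at least
`c₁ Rⁿ |π(A)|`, where `c₁ > 0` does not depend on `A` or `R`; that is,
`‖M_A‖_{L¹ → L^{1,∞}} ≥ c₁ Rⁿ |π(A)|`. -/
theorem maxOpSet_weak_type_lower_bound (n : ℕ) :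
    ∃ c₁ : ℝ, 0 < c₁ ∧
      ∀ R : ℝ, 0 < R →
        ∀ A : Set (EuclideanSpace ℝ (Fin n)), IsOpen A →
          A ⊆ {x : EuclideanSpace ℝ (Fin n) | R ≤ ‖x‖ ∧ ‖x‖ < 2 * R} →
          ∀ Cw : ℝ≥0∞,
            (∀ f : EuclideanSpace ℝ (Fin n) → ℝ, MemLp f 1 volume →
              ∀ α : ℝ≥0∞, α ≠ 0 →
                α * volume {x | α < maxOpSet A f x} ≤ Cw * eLpNorm f 1 volume) →
            ENNReal.ofReal (c₁ * R ^ n) * μH[(n : ℝ) - 1] (sphProj '' A) ≤ Cw := by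
  set c : ℝ≥0 := (volume : Measure (EuclideanSpace ℝ (Fin n))).addHaarScalarFactor μH[n]
  have hc : 0 < c :=
    pos_iff_ne_zero.2 (Measure.addHaarScalarFactor_volume_hausdorffMeasure_ne_zero n)
  refine ⟨c / (2 * 4 ^ n), by positivity, fun R hR A hA hAR Cw hCw ↦ ?_⟩
  rw [hA.measure_image_eq_iSup, ENNReal.mul_iSup]
  refine iSup_le fun k ↦ ?_
  set K := {a | ball a (1 / ((k : ℝ) + 1)) ⊆ A}
  have hK : ∀ a ∈ K, R ≤ ‖a‖ ∧ ball a (1 / ((k : ℝ) + 1)) ⊆ A := fun a ha ↦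
    ⟨(hAR (ha (mem_ball_self (by positivity)))).1, ha⟩
  have hT : sphProj '' K ⊆ sphere 0 1 := by
    rintro _ ⟨a, ha, rfl⟩
    exact mem_sphere_zero_iff_norm.2 (norm_sphProj (norm_pos_iff.1 (hR.trans_le (hK a ha).1)))
  have hD : ENNReal.ofReal (2 * 4 ^ n) ≠ 0 := (ENNReal.ofReal_pos.2 (by positivity)).ne'
  calc ENNReal.ofReal (c / (2 * 4 ^ n) * R ^ n) * μH[(n : ℝ) - 1] (sphProj '' K)
      = (ENNReal.ofReal (2 * 4 ^ n))⁻¹ *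
          (ENNReal.ofReal (c * R ^ n) * μH[(n : ℝ) - 1] (sphProj '' K)) := by
        rw [div_mul_eq_mul_div, ENNReal.ofReal_div_of_pos (by positivity), div_eq_mul_inv]
        ring
    _ ≤ (ENNReal.ofReal (2 * 4 ^ n))⁻¹ * (ENNReal.ofReal (2 * 4 ^ n) * Cw) := by
        gcongr (ENNReal.ofReal (2 * 4 ^ n))⁻¹ * ?_
        exact (ofReal_mul_hausdorffMeasure_le_volume_conicalShell hT hR).trans
          (volume_conicalShell_le_of_weakType11Bound hCw hR (by positivity) (by norm_num) hK _)
    _ = Cw := ENNReal.inv_mul_cancel_left hD ENNReal.ofReal_ne_top
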